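/- arXiv:2203.09971 — 4 statements merged into one kernel-verified Lean document; each statement's English description precedes it below -/
import Mathlib

section
/- Every moving phantom mechanism is a truthful budget aggregation mechanism: for every moving phantom mechanism f over m ≥ 2 projects and n ≥ 1 voters, every preference profile V, every voter i, and all divisions v*_i (the voter's true peak) and v_i, the ℓ1 distance from v*_i to f(V_{-i}, v*_i) is at most the ℓ1 distance from v*_i to f(V_{-i}, v_i). -/
/-! A voter's report on project `j` only matters to the median on `j` through which side of
the median it lies on. Fix the two outcomes `a` (truthful) and `b` (misreport), reached at
phantom times `tA ≤ tB` (the other case is symmetric). If `a j` exceeds the true peak on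
project `j`, the truthful report lies strictly below the median, so replacing it by anything
and raising the phantoms can only raise that median: `a j ≤ b j` wherever `a` overshoots the
peak. Since both outcomes and the peak sum to `1`, the ℓ1 distance to the peak is twice the
total overshoot, and the overshoot of `b` dominates that of `a`. -/

open Finset

/-- A division among `m` projects: coordinates in `[0,1]` summing to `1`. -/
def IsDivision {m : ℕ} (x : Fin m → ℝ) : Prop :=
  (∀ j, 0 ≤ x j ∧ x j ≤ 1) ∧ ∑ j, x j = 1

/-- The ℓ1 distance between two vectors over `Fin m`. -/
noncomputable def l1 {m : ℕ} (x y : Fin m → ℝ) : ℝ := ∑ j, |x j - y j|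

/-- The proportional division (coordinatewise mean) of a profile. -/
noncomputable def propDiv {n m : ℕ} (V : Fin n → Fin m → ℝ) : Fin m → ℝ :=
  fun j => (∑ i, V i j) / (n : ℝ)

/-- The `(k+1)`-th smallest element of a multiset of reals. -/
noncomputable def medianAt (s : Multiset ℝ) (k : ℕ) : ℝ :=
  (s.sort (· ≤ ·)).getD k 0

/-- Voter reports on project `j` together with the `n+1` phantom values `p 0, …, p n`. -/
noncomputable def projValues {n m : ℕ} (V : Fin n → Fin m → ℝ)
    (p : ℕ → ℝ) (j : Fin m) : Multiset ℝ :=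
  (Multiset.map (fun i => V i j) Finset.univ.val) +
    (Multiset.map p (Finset.range (n + 1)).val)

/-- The median (the `(n+1)`-th smallest of the `2n+1` values) of the `n` voter reports
on project `j` together with the `n+1` phantom values. -/
noncomputable def phantomMedian {n m : ℕ} (V : Fin n → Fin m → ℝ)
    (p : ℕ → ℝ) (j : Fin m) : ℝ :=
  medianAt (projValues V p j) n

/-- A phantom system for `n` voters: continuous, weakly increasing functions
`y k : [0,1] → [0,1]`, `k = 0, …, n`, with `y k 0 = 0`, `y k 1 = 1`,
pointwise ordered in `k`. -/
structure PhantomSystem (n : ℕ) where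
  y : ℕ → ℝ → ℝ
  contOn : ∀ k ≤ n, ContinuousOn (y k) (Set.Icc 0 1)
  monoOn : ∀ k ≤ n, MonotoneOn (y k) (Set.Icc 0 1)
  mem_Icc : ∀ k ≤ n, ∀ t ∈ Set.Icc (0:ℝ) 1, y k t ∈ Set.Icc (0:ℝ) 1
  map_zero : ∀ k ≤ n, y k 0 = 0
  map_one : ∀ k ≤ n, y k 1 = 1
  mono_idx : ∀ t ∈ Set.Icc (0:ℝ) 1, ∀ k k', k ≤ k' → k' ≤ n → y k t ≤ y k' t

/-- `f` is the moving phantom mechanism associated with the phantom system `Y`: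
on each profile of divisions, for some `t*` making the medians sum to `1`,
it outputs on each project the median of the voter reports and the phantom values. -/
def IsMovingPhantom {n m : ℕ} (f : (Fin n → Fin m → ℝ) → (Fin m → ℝ))
    (Y : PhantomSystem n) : Prop :=
  ∀ V : Fin n → Fin m → ℝ, (∀ i, IsDivision (V i)) →
    ∃ t ∈ Set.Icc (0:ℝ) 1,
      (∑ j, phantomMedian V (fun k => Y.y k t) j) = 1 ∧
      ∀ j, f V j = phantomMedian V (fun k => Y.y k t) j

/-- Truthfulness of a budget aggregation mechanism: no voter `i` with true peak `V i`
can get an outcome closer (in ℓ1 distance) to her peak by reporting some division `v`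
instead of `V i`. -/
def Truthful {n m : ℕ} (f : (Fin n → Fin m → ℝ) → (Fin m → ℝ)) : Prop :=
  ∀ V : Fin n → Fin m → ℝ, (∀ i, IsDivision (V i)) →
    ∀ i : Fin n, ∀ v : Fin m → ℝ, IsDivision v →
      l1 (f V) (V i) ≤ l1 (f (Function.update V i v)) (V i)

/-- The ℓ1-loss of mechanism `f` on profile `V`. -/
noncomputable def loss {n m : ℕ} (f : (Fin n → Fin m → ℝ) → (Fin m → ℝ))
    (V : Fin n → Fin m → ℝ) : ℝ :=
  l1 (f V) (propDiv V)

/-- The phantom system of the Piecewise Uniform mechanism for `n` voters. -/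
noncomputable def puPhantom (n : ℕ) (k : ℕ) (t : ℝ) : ℝ :=
  if t < 1 / 2 then
    (if (k : ℝ) / (n : ℝ) < 1 / 2 then 0 else 4 * t * (k : ℝ) / (n : ℝ) - 2 * t)
  else
    (if (k : ℝ) / (n : ℝ) < 1 / 2 then (k : ℝ) * (2 * t - 1) / (n : ℝ)
     else (k : ℝ) * (3 - 2 * t) / (n : ℝ) - 2 + 2 * t)

/-- `w` is an output of the Piecewise Uniform mechanism on profile `V`. -/
def IsPUOutcome {n m : ℕ} (V : Fin n → Fin m → ℝ) (w : Fin m → ℝ) : Prop :=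
  ∃ t ∈ Set.Icc (0:ℝ) 1,
    (∑ j, phantomMedian V (fun k => puPhantom n k t) j) = 1 ∧
    ∀ j, w j = phantomMedian V (fun k => puPhantom n k t) j

/-- `w` is an output of the Independent Markets mechanism (phantoms `min (k·t) 1`)
on profile `V`. -/
def IsIMOutcome {n m : ℕ} (V : Fin n → Fin m → ℝ) (w : Fin m → ℝ) : Prop :=
  ∃ t : ℝ, 0 ≤ t ∧
    (∑ j, phantomMedian V (fun k => min ((k : ℝ) * t) 1) j) = 1 ∧
    ∀ j, w j = phantomMedian V (fun k => min ((k : ℝ) * t) 1) j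

/-- A single-minded division: it assigns the whole budget to one project. -/
def SingleMindedDiv {m : ℕ} (v : Fin m → ℝ) : Prop := ∃ j, v j = 1

/-- A double-minded division relative to an outcome `w` (three projects): it agrees with
`w` on one project `j`, proposes `1 - w j` on another project, and `0` on the third. -/
def DoubleMindedDiv (w v : Fin 3 → ℝ) : Prop :=
  ∃ j j' : Fin 3, j ≠ j' ∧ v j = w j ∧ v j' = 1 - w j ∧
    ∀ k, k ≠ j → k ≠ j' → v k = 0

/-- A three-type profile for mechanism `f`: each voter is fully-satisfied,
double-minded, or single-minded. -/
def ThreeTypeProfile {n : ℕ} (f : (Fin n → Fin 3 → ℝ) → (Fin 3 → ℝ))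
    (V : Fin n → Fin 3 → ℝ) : Prop :=
  ∀ i, V i = f V ∨ DoubleMindedDiv (f V) (V i) ∨ SingleMindedDiv (V i)

/-- The single-minded division fully supporting project `j`. -/
noncomputable def singleDiv (j : Fin 3) : Fin 3 → ℝ :=
  fun j' => if j' = j then 1 else 0

/-- The double-minded division proposing `x k` on project `k`, `1 - x k` on
project `j` and `0` on the remaining project. -/
noncomputable def doubleDiv (x : Fin 3 → ℝ) (k j : Fin 3) : Fin 3 → ℝ :=
  fun j' => if j' = k then x k else if j' = j then 1 - x k else 0

/-- A utilitarian mechanism: it always returns a division minimizing the total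
ℓ1 distance (social cost) to the voters' proposals. -/
def Utilitarian {n m : ℕ} (f : (Fin n → Fin m → ℝ) → (Fin m → ℝ)) : Prop :=
  ∀ V : Fin n → Fin m → ℝ, (∀ i, IsDivision (V i)) →
    IsDivision (f V) ∧
    ∀ x : Fin m → ℝ, IsDivision x → (∑ i, l1 (V i) (f V)) ≤ ∑ i, l1 (V i) x

theorem List.SortedLE.le_of_mem_drop {α : Type*} [Preorder α] {l : List α} (hl : l.SortedLE)
    {k : ℕ} (hk : k < l.length) {a : α} (ha : a ∈ l.drop k) : l[k] ≤ a := by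
  obtain ⟨j, hj, rfl⟩ := List.getElem_of_mem ha
  rw [List.getElem_drop]
  exact hl.getElem_le_getElem_of_le (Nat.le_add_right k j)

theorem List.SortedLE.le_of_mem_take {α : Type*} [Preorder α] {l : List α} (hl : l.SortedLE)
    {k : ℕ} (hk : k < l.length) {a : α} (ha : a ∈ l.take (k + 1)) : a ≤ l[k] := by
  obtain ⟨j, hj, rfl⟩ := List.getElem_of_mem ha
  rw [List.getElem_take]
  exact hl.getElem_le_getElem_of_le (by simp only [List.length_take, lt_inf_iff] at hj; omega)

theorem List.SortedLE.length_sub_le_countP_iff {α : Type*} [Preorder α] {l : List α}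
    (hl : l.SortedLE) {P : α → Prop} [DecidablePred P] (hP : Monotone P) {k : ℕ}
    (hk : k < l.length) : l.length - k ≤ l.countP (P ·) ↔ P l[k] := by
  constructor
  · intro h
    by_contra hPk
    have htake : (l.take (k + 1)).countP (P ·) = 0 :=
      List.countP_eq_zero.2 fun a ha hPa => hPk (hP (hl.le_of_mem_take hk ha) (by simpa using hPa))
    have hdrop := List.countP_le_length (p := (P ·)) (l := l.drop (k + 1))
    rw [← List.take_append_drop (k + 1) l, List.countP_append, htake] at h
    simp only [List.length_drop, List.length_append, List.length_take] at h hdrop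
    omega
  · intro hPk
    have hdrop : (l.drop k).countP (P ·) = (l.drop k).length :=
      List.countP_eq_length.2 fun a ha => by simpa using hP (hl.le_of_mem_drop hk ha) hPk
    calc l.length - k = (l.drop k).countP (P ·) := by rw [hdrop, List.length_drop]
      _ ≤ l.countP (P ·) := (List.drop_sublist k l).countP_le

theorem Monotone.apply_medianAt_iff {P : ℝ → Prop} [DecidablePred P] (hP : Monotone P)
    {s : Multiset ℝ} {n : ℕ} (hs : Multiset.card s = 2 * n + 1) :
    P (medianAt s n) ↔ n + 1 ≤ s.countP P := by
  set l := s.sort (· ≤ ·) with hl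
  have hls : (l : Multiset ℝ) = s := Multiset.sort_eq s _
  have hlen : l.length = 2 * n + 1 := by rw [hl, Multiset.length_sort, hs]
  have hsorted : l.SortedLE := (Multiset.pairwise_sort s _).sortedLE
  rw [medianAt, ← hl, List.getD_eq_getElem _ _ (by omega),
    ← hsorted.length_sub_le_countP_iff hP (by omega), ← hls, Multiset.coe_countP, hlen]
  omega

theorem Antitone.apply_medianAt_iff {P : ℝ → Prop} [DecidablePred P] (hP : Antitone P)
    {s : Multiset ℝ} {n : ℕ} (hs : Multiset.card s = 2 * n + 1) :
    P (medianAt s n) ↔ n + 1 ≤ s.countP P := by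
  have hnotP : Monotone (fun x => ¬ P x) := fun _ _ hab => mt (hP hab)
  have hsplit := Multiset.card_eq_countP_add_countP P s
  rw [← not_not (a := P _), hnotP.apply_medianAt_iff hs]
  omega

theorem Multiset.countP_map_le_countP_map {ι α : Type*} {s : Multiset ι} {g g' : ι → α}
    {P : α → Prop} [DecidablePred P] (h : ∀ a ∈ s, P (g a) → P (g' a)) :
    (s.map g).countP P ≤ (s.map g').countP P := by
  rw [Multiset.countP_map, Multiset.countP_map, ← Multiset.countP_eq_card_filter,
    ← Multiset.countP_eq_card_filter]
  induction s using Quotient.inductionOn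
  simpa using List.countP_mono_left (by simpa using h)

theorem card_projValues {n m : ℕ} (V : Fin n → Fin m → ℝ) (p : ℕ → ℝ) (j : Fin m) :
    Multiset.card (projValues V p j) = 2 * n + 1 := by
  simp only [projValues, Multiset.card_add, Multiset.card_map, ← Finset.card_def,
    Finset.card_univ, Fintype.card_fin, Finset.card_range]
  omega

section PhantomMedian

variable {n m : ℕ} {V : Fin n → Fin m → ℝ} {i : Fin n} {w w' : Fin m → ℝ} {p p' : ℕ → ℝ}
  {j : Fin m}

theorem countP_projValues_update_le {P : ℝ → Prop} [DecidablePred P] (hw : ¬ P (w j))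
    (hp : ∀ k ≤ n, P (p k) → P (p' k)) :
    (projValues (Function.update V i w) p j).countP P ≤
      (projValues (Function.update V i w') p' j).countP P := by
  simp only [projValues, Multiset.countP_add]
  refine add_le_add (Multiset.countP_map_le_countP_map fun a _ hPa => ?_)
    (Multiset.countP_map_le_countP_map fun k hk => hp k ?_)
  · rcases eq_or_ne a i with rfl | hne
    · exact absurd (by simpa using hPa) hw
    · simpa [Function.update_of_ne hne] using hPa
  · exact Nat.lt_succ_iff.1 (Finset.mem_range.1 hk)

theorem phantomMedian_update_mono_of_lt (hp : ∀ k ≤ n, p k ≤ p' k)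
    (h : w j < phantomMedian (Function.update V i w) p j) :
    phantomMedian (Function.update V i w) p j ≤ phantomMedian (Function.update V i w') p' j := by
  set μ := phantomMedian (Function.update V i w) p j
  have hP : Monotone (μ ≤ ·) := fun _ _ hab hμ => hμ.trans hab
  rw [phantomMedian, hP.apply_medianAt_iff (card_projValues _ _ _)]
  calc n + 1 ≤ (projValues (Function.update V i w) p j).countP (μ ≤ ·) :=
        (hP.apply_medianAt_iff (card_projValues _ _ _)).1 le_rfl
    _ ≤ _ := countP_projValues_update_le h.not_ge fun k hk hμ => hμ.trans (hp k hk)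

theorem phantomMedian_update_antitone_of_gt (hp : ∀ k ≤ n, p' k ≤ p k)
    (h : phantomMedian (Function.update V i w) p j < w j) :
    phantomMedian (Function.update V i w') p' j ≤ phantomMedian (Function.update V i w) p j := by
  set μ := phantomMedian (Function.update V i w) p j
  have hP : Antitone (· ≤ μ) := fun _ _ hab hμ => hab.trans hμ
  rw [phantomMedian, hP.apply_medianAt_iff (card_projValues _ _ _)]
  calc n + 1 ≤ (projValues (Function.update V i w) p j).countP (· ≤ μ) :=
        (hP.apply_medianAt_iff (card_projValues _ _ _)).1 le_rfl
    _ ≤ _ := countP_projValues_update_le h.not_ge fun k hk hμ => (hp k hk).trans hμ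

end PhantomMedian

theorem sum_abs_eq_two_mul_sum_posPart {ι : Type*} (s : Finset ι) (x : ι → ℝ)
    (h : ∑ i ∈ s, x i = 0) : ∑ i ∈ s, |x i| = 2 * ∑ i ∈ s, (x i)⁺ := by
  have habs (a : ℝ) : |a| = 2 * a⁺ - a := by
    linarith [posPart_add_negPart a, posPart_sub_negPart a]
  simp_rw [habs, Finset.sum_sub_distrib, ← Finset.mul_sum, h, sub_zero]

section L1

variable {m : ℕ} {p a b : Fin m → ℝ}

theorem l1_le_l1_of_lt_imp_le (ha : ∑ j, a j = ∑ j, p j) (hb : ∑ j, b j = ∑ j, p j)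
    (h : ∀ j, p j < a j → a j ≤ b j) : l1 a p ≤ l1 b p := by
  have hl1 (c : Fin m → ℝ) (hc : ∑ j, c j = ∑ j, p j) : l1 c p = 2 * ∑ j, (c j - p j)⁺ :=
    sum_abs_eq_two_mul_sum_posPart _ _ (by rw [Finset.sum_sub_distrib, hc, sub_self])
  rw [hl1 a ha, hl1 b hb]
  gcongr with j
  rcases lt_or_ge (p j) (a j) with hj | hj
  · exact posPart_mono (by linarith [h j hj])
  · rw [posPart_eq_zero.2 (by linarith)]
    exact posPart_nonneg _

theorem l1_le_l1_of_gt_imp_le (ha : ∑ j, a j = ∑ j, p j) (hb : ∑ j, b j = ∑ j, p j)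
    (h : ∀ j, a j < p j → b j ≤ a j) : l1 a p ≤ l1 b p := by
  have hneg (c : Fin m → ℝ) : l1 (-c) (-p) = l1 c p := by
    simp only [l1, Pi.neg_apply, neg_sub_neg, abs_sub_comm]
  rw [← hneg a, ← hneg b]
  refine l1_le_l1_of_lt_imp_le ?_ ?_ fun j hj => ?_
  · simp [ha]
  · simp [hb]
  · simpa using h j (by simpa using hj)

end L1

theorem moving_phantom_truthful_general {n m : ℕ}
    (f : (Fin n → Fin m → ℝ) → (Fin m → ℝ)) (Y : PhantomSystem n)
    (hf : IsMovingPhantom f Y)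
    (V : Fin n → Fin m → ℝ) (hV : ∀ i, IsDivision (V i))
    (i : Fin n) (vstar v : Fin m → ℝ)
    (hvstar : IsDivision vstar) (hv : IsDivision v) :
    l1 (f (Function.update V i vstar)) vstar ≤ l1 (f (Function.update V i v)) vstar := by
  have hprofile (w : Fin m → ℝ) (hw : IsDivision w) : ∀ i', IsDivision (Function.update V i w i') :=
    (Function.forall_update_iff V fun _ x => IsDivision x).2 ⟨hw, fun i' _ => hV i'⟩
  obtain ⟨tA, htA, hsumA, hA⟩ := hf _ (hprofile vstar hvstar)
  obtain ⟨tB, htB, hsumB, hB⟩ := hf _ (hprofile v hv)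
  rw [funext hA, funext hB]
  rw [← hvstar.2] at hsumA hsumB
  rcases le_total tA tB with hT | hT
  · exact l1_le_l1_of_lt_imp_le hsumA hsumB fun j =>
      phantomMedian_update_mono_of_lt fun k hk => Y.monoOn k hk htA htB hT
  · exact l1_le_l1_of_gt_imp_le hsumA hsumB fun j =>
      phantomMedian_update_antitone_of_gt fun k hk => Y.monoOn k hk htB htA hT

/-- Every moving phantom mechanism is truthful: for every moving phantom
mechanism `f` over `m ≥ 2` projects and `n ≥ 1` voters, every preference profile,
every voter `i`, and all divisions `vstar` (the true peak) and `v`, the ℓ1 distance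
from `vstar` to the output under truthful reporting is at most the ℓ1 distance from
`vstar` to the output under misreporting `v`. -/
theorem moving_phantom_truthful {n m : ℕ} (hn : 1 ≤ n) (hm : 2 ≤ m)
    (f : (Fin n → Fin m → ℝ) → (Fin m → ℝ)) (Y : PhantomSystem n)
    (hf : IsMovingPhantom f Y)
    (V : Fin n → Fin m → ℝ) (hV : ∀ i, IsDivision (V i))
    (i : Fin n) (vstar v : Fin m → ℝ)
    (hvstar : IsDivision vstar) (hv : IsDivision v) :
    l1 (f (Function.update V i vstar)) vstar ≤ l1 (f (Function.update V i v)) vstar :=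
  moving_phantom_truthful_general f Y hf V hV i vstar v hvstar hv
end

section
/- Let n ≥ 1 and let x_1,…,x_n ∈ [0,1]. Let x be the median of the 2n+1 values x_1,…,x_n, 0, 1/n, 2/n, …, 1 (i.e., the n voter values together with the n+1 uniformly spaced phantom values k/n for k = 0,…,n). Then |x − (1/n) Σ_{i=1}^n x_i| ≤ 1/4. -/
open Finset

/-! Let `m` be the median. At least `n + 1` of the `2n + 1` values are `≤ m`, and at most
`m n + 1` of them are phantoms `k / n`, so at least `n (1 - m)` voters lie at or below `m`;
symmetrically at least `n m` voters lie at or above `m`. The voters above `m` give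
`∑ xᵢ ≥ n m²`, the voters below give `∑ (1 - xᵢ) ≥ n (1 - m)²`, so the mean lies in
`[m², 1 - (1 - m)²]`, whose points are within `m (1 - m) ≤ 1/4` of `m`. -/

namespace List

variable {α : Type*} [LinearOrder α] {l : List α}

theorem SortedLE.succ_le_countP_le_getElem (hl : l.SortedLE) {i : ℕ} (hi : i < l.length) :
    i + 1 ≤ l.countP (· ≤ l[i]) :=
  calc i + 1 = (l.take (i + 1)).length := by simp; omega
    _ = (l.take (i + 1)).countP (· ≤ l[i]) := by
      refine (countP_eq_length.2 fun a ha => ?_).symm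
      obtain ⟨j, hj, rfl⟩ := mem_take_iff_getElem.1 ha
      simpa using hl.getElem_le_getElem_of_le (by omega)
    _ ≤ l.countP (· ≤ l[i]) := (take_sublist _ _).countP_le

theorem SortedLE.length_sub_le_countP_getElem_le (hl : l.SortedLE) {i : ℕ} (hi : i < l.length) :
    l.length - i ≤ l.countP (l[i] ≤ ·) :=
  calc l.length - i = (l.drop i).length := by simp
    _ = (l.drop i).countP (l[i] ≤ ·) := by
      refine (countP_eq_length.2 fun a ha => ?_).symm
      obtain ⟨j, hj, rfl⟩ := mem_iff_getElem.1 ha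
      simpa using hl.getElem_le_getElem_of_le (by omega)
    _ ≤ l.countP (l[i] ≤ ·) := (drop_sublist _ _).countP_le

end List

section medianAt

variable {s : Multiset ℝ} {k : ℕ}

theorem medianAt_eq_getElem (hk : k < Multiset.card s) :
    medianAt s k = (s.sort (· ≤ ·))[k]'(by simpa using hk) :=
  List.getD_eq_getElem _ _ _

theorem medianAt_mem (hk : k < Multiset.card s) : medianAt s k ∈ s := by
  rw [medianAt_eq_getElem hk, ← Multiset.mem_sort (· ≤ ·)]
  exact List.getElem_mem _

theorem succ_le_countP_le_medianAt (hk : k < Multiset.card s) :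
    k + 1 ≤ s.countP (· ≤ medianAt s k) := by
  have h := (Multiset.pairwise_sort s (· ≤ ·)).sortedLE.succ_le_countP_le_getElem
    (by simpa using hk)
  rwa [← Multiset.coe_countP, Multiset.sort_eq, ← medianAt_eq_getElem hk] at h

theorem card_sub_le_countP_medianAt_le (hk : k < Multiset.card s) :
    Multiset.card s - k ≤ s.countP (medianAt s k ≤ ·) := by
  have h := (Multiset.pairwise_sort s (· ≤ ·)).sortedLE.length_sub_le_countP_getElem_le
    (by simpa using hk)
  rwa [← Multiset.coe_countP, Multiset.sort_eq, ← medianAt_eq_getElem hk,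
    Multiset.length_sort] at h

end medianAt

theorem card_filter_le_mul_le_sum {ι : Type*} [Fintype ι] (x : ι → ℝ) (hx : ∀ i, 0 ≤ x i)
    (m : ℝ) : #{i | m ≤ x i} * m ≤ ∑ i, x i :=
  calc #{i | m ≤ x i} * m = #{i | m ≤ x i} • m := (nsmul_eq_mul _ _).symm
    _ ≤ ∑ i ∈ {i | m ≤ x i}, x i := card_nsmul_le_sum _ _ _ fun _ hi => (mem_filter.1 hi).2
    _ ≤ ∑ i, x i := sum_le_sum_of_subset_of_nonneg (subset_univ _) fun i _ _ => hx i

theorem card_range_filter_natCast_le (N : ℕ) {a : ℝ} (ha : 0 ≤ a) :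
    (#{k ∈ range N | (k : ℕ) ≤ a} : ℝ) ≤ a + 1 := by
  have hsub : {k ∈ range N | (k : ℕ) ≤ a} ⊆ range (⌊a⌋₊ + 1) := fun k hk => by
    rw [mem_range, Nat.lt_succ_iff]
    exact Nat.le_floor (mem_filter.1 hk).2
  calc (#{k ∈ range N | (k : ℕ) ≤ a} : ℝ) ≤ ⌊a⌋₊ + 1 := by
        exact_mod_cast (card_le_card hsub).trans (card_range _).le
    _ ≤ a + 1 := by gcongr; exact Nat.floor_le ha

theorem card_range_filter_le_natCast (N : ℕ) {a : ℝ} (ha : a ≤ N) :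
    (#{k ∈ range (N + 1) | a ≤ (k : ℕ)} : ℝ) ≤ N + 1 - a := by
  have hceil : ⌈a⌉₊ ≤ N := Nat.ceil_le.2 ha
  have hsub : {k ∈ range (N + 1) | a ≤ (k : ℕ)} ⊆ Ico ⌈a⌉₊ (N + 1) := fun k hk => by
    rw [mem_filter, mem_range] at hk
    exact mem_Ico.2 ⟨Nat.ceil_le.2 hk.2, hk.1⟩
  calc (#{k ∈ range (N + 1) | a ≤ (k : ℕ)} : ℝ) ≤ ((N + 1 - ⌈a⌉₊ : ℕ) : ℝ) := by
        exact_mod_cast (card_le_card hsub).trans (Nat.card_Ico _ _).le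
    _ = N + 1 - ⌈a⌉₊ := by push_cast [Nat.cast_sub (by omega : ⌈a⌉₊ ≤ N + 1)]; ring
    _ ≤ N + 1 - a := by linarith [Nat.le_ceil a]

noncomputable def uniformPhantoms (n : ℕ) : Multiset ℝ :=
  (range (n + 1)).val.map fun k : ℕ => (k : ℝ) / n

-- Left untyped, `k` elaborates to a real and `range (n + 1)` is coerced to a multiset of
-- reals through the multiset monad.
theorem map_div_natCast_range_val (n : ℕ) :
    Multiset.map (fun k => (k : ℝ) / n) (range (n + 1)).val = uniformPhantoms n := by
  simp only [Multiset.pure_def, Multiset.bind_def, Multiset.bind_singleton, Multiset.map_map]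
  rfl

section uniformPhantoms

variable {n : ℕ} {m : ℝ}

theorem mem_Icc_of_mem_uniformPhantoms (hn : 0 < n) {a : ℝ} (ha : a ∈ uniformPhantoms n) :
    a ∈ Set.Icc 0 1 := by
  obtain ⟨k, hk, rfl⟩ := Multiset.mem_map.1 ha
  have hkn : (k : ℝ) ≤ n := by exact_mod_cast Nat.lt_succ_iff.1 (mem_range.1 hk)
  exact ⟨by positivity, div_le_one_of_le₀ hkn n.cast_nonneg⟩

theorem countP_uniformPhantoms_le_le (hn : 0 < n) (hm : 0 ≤ m) :
    ((uniformPhantoms n).countP (· ≤ m) : ℝ) ≤ m * n + 1 := by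
  have hn' : (0 : ℝ) < n := by exact_mod_cast hn
  rw [uniformPhantoms, Multiset.countP_map]
  simp_rw [div_le_iff₀ hn']
  exact card_range_filter_natCast_le _ (mul_nonneg hm n.cast_nonneg)

theorem countP_le_uniformPhantoms_le (hn : 0 < n) (hm : m ≤ 1) :
    ((uniformPhantoms n).countP (m ≤ ·) : ℝ) ≤ n + 1 - m * n := by
  have hn' : (0 : ℝ) < n := by exact_mod_cast hn
  rw [uniformPhantoms, Multiset.countP_map]
  simp_rw [le_div_iff₀ hn']
  exact card_range_filter_le_natCast _ (mul_le_of_le_one_left n.cast_nonneg hm)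

end uniformPhantoms

noncomputable def uniformMedian {n : ℕ} (x : Fin n → ℝ) : ℝ :=
  medianAt (univ.val.map x + uniformPhantoms n) n

section uniformMedian

variable {n : ℕ} {x : Fin n → ℝ}

theorem card_voters_add_uniformPhantoms (x : Fin n → ℝ) :
    Multiset.card (univ.val.map x + uniformPhantoms n) = 2 * n + 1 := by
  simp only [uniformPhantoms, Multiset.card_add, Multiset.card_map, card_val, card_univ,
    Fintype.card_fin, card_range]
  ring

theorem uniformMedian_mem_Icc (hn : 0 < n) (hx : ∀ i, x i ∈ Set.Icc (0 : ℝ) 1) :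
    uniformMedian x ∈ Set.Icc 0 1 := by
  have hmem := medianAt_mem (s := univ.val.map x + uniformPhantoms n) (k := n)
    (by rw [card_voters_add_uniformPhantoms]; omega)
  rcases Multiset.mem_add.1 hmem with h | h
  · obtain ⟨i, -, hi⟩ := Multiset.mem_map.1 h
    rw [uniformMedian, ← hi]
    exact hx i
  · exact mem_Icc_of_mem_uniformPhantoms hn h

theorem sub_mul_le_card_le_uniformMedian (hn : 0 < n) (hm : 0 ≤ uniformMedian x) :
    (n : ℝ) - uniformMedian x * n ≤ #{i | x i ≤ uniformMedian x} := by
  have hcount := succ_le_countP_le_medianAt (s := univ.val.map x + uniformPhantoms n) (k := n)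
    (by rw [card_voters_add_uniformPhantoms]; omega)
  rw [Multiset.countP_add, Multiset.countP_map] at hcount
  have hcount' : (n : ℝ) + 1 ≤ #{i | x i ≤ uniformMedian x}
      + (uniformPhantoms n).countP (· ≤ uniformMedian x) := by exact_mod_cast hcount
  linarith [countP_uniformPhantoms_le_le hn hm]

theorem mul_le_card_uniformMedian_le (hn : 0 < n) (hm : uniformMedian x ≤ 1) :
    uniformMedian x * n ≤ #{i | uniformMedian x ≤ x i} := by
  have hcount := card_sub_le_countP_medianAt_le (s := univ.val.map x + uniformPhantoms n) (k := n)
    (by rw [card_voters_add_uniformPhantoms]; omega)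
  rw [card_voters_add_uniformPhantoms, show 2 * n + 1 - n = n + 1 by omega,
    Multiset.countP_add, Multiset.countP_map] at hcount
  have hcount' : (n : ℝ) + 1 ≤ #{i | uniformMedian x ≤ x i}
      + (uniformPhantoms n).countP (uniformMedian x ≤ ·) := by exact_mod_cast hcount
  linarith [countP_le_uniformPhantoms_le hn hm]

end uniformMedian

/-- Let `n ≥ 1` and `x 1, …, x n ∈ [0,1]`. The median of the `2n+1`
values `x 1, …, x n, 0, 1/n, …, 1` ((n+1)-th smallest) is within `1/4` of the mean
of the `x i`. -/
theorem uniform_median_close_to_mean {n : ℕ} (hn : 1 ≤ n)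
    (x : Fin n → ℝ) (hx : ∀ i, x i ∈ Set.Icc (0:ℝ) 1) :
    |medianAt ((Multiset.map x Finset.univ.val) +
        (Multiset.map (fun k => (k : ℝ) / (n : ℝ)) (Finset.range (n + 1)).val)) n
      - (∑ i, x i) / (n : ℝ)| ≤ 1 / 4 := by
  rw [map_div_natCast_range_val]
  change |uniformMedian x - _| ≤ _
  have hn0 : (0 : ℝ) < n := by exact_mod_cast hn
  have hm := uniformMedian_mem_Icc hn hx
  have hbelow := sub_mul_le_card_le_uniformMedian hn hm.1
  have habove := mul_le_card_uniformMedian_le hn hm.2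
  have hsum_above := card_filter_le_mul_le_sum x (fun i => (hx i).1) (uniformMedian x)
  have hsum_below := card_filter_le_mul_le_sum (fun i => 1 - x i)
    (fun i => sub_nonneg.2 (hx i).2) (1 - uniformMedian x)
  simp only [sub_le_sub_iff_left, sum_sub_distrib, sum_const, card_univ, Fintype.card_fin,
    nsmul_eq_mul, mul_one] at hsum_below
  set m := uniformMedian x
  have hlower : m ^ 2 ≤ (∑ i, x i) / n := by
    rw [le_div_iff₀ hn0]
    nlinarith [mul_le_mul_of_nonneg_right habove hm.1]
  have hupper : (∑ i, x i) / n ≤ 1 - (1 - m) ^ 2 := by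
    rw [div_le_iff₀ hn0]
    nlinarith [mul_le_mul_of_nonneg_right hbelow (sub_nonneg.2 hm.2)]
  rw [abs_le]
  constructor <;> nlinarith [sq_nonneg (2 * m - 1)]
end

section
/- Let x, y, z be divisions over m projects (vectors in [0,1]^m summing to 1) with x ≠ y. Then there exists a pair of distinct projects j, j' such that either (i) x_j ≤ min{y_j, z_j} and x_{j'} ≥ max{y_{j'}, z_{j'}}, or (ii) y_j ≤ x_j ≤ z_j and z_{j'} ≤ x_{j'} ≤ y_{j'}. -/
/-! Equal sums and `x ≠ y` give coordinates `j`, `j'` with `x j < y j` and `y j' < x j'`.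
Comparing `x` with `z` there either yields the required pair directly, or shows `x ≠ z`; then
equal sums give a coordinate `k` where `x` and `z` are ordered the other way round, and `k`
pairs with `j` or with `j'` according to the position of `y k`. -/

open Finset

def HasTwoTypePair {ι M : Type*} [LinearOrder M] (x y z : ι → M) : Prop :=
  ∃ j j' : ι, j ≠ j' ∧
    ((x j ≤ min (y j) (z j) ∧ max (y j') (z j') ≤ x j') ∨
     (y j ≤ x j ∧ x j ≤ z j ∧ z j' ≤ x j' ∧ x j' ≤ y j'))

section TwoTypes

variable {ι M : Type*} [Fintype ι] [AddCommMonoid M] [LinearOrder M] [IsOrderedCancelAddMonoid M]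
  {x y z : ι → M}

theorem exists_lt_of_sum_eq_of_ne {f g : ι → M} (hsum : ∑ i, f i = ∑ i, g i)
    (hne : f ≠ g) : ∃ i, f i < g i := by
  by_contra! hle
  exact hne (funext fun i =>
    ((sum_eq_sum_iff_of_le fun i _ => hle i).1 hsum.symm i (mem_univ i)).symm)

theorem hasTwoTypePair_of_le_min_of_lt_between (hxz : ∑ i, x i = ∑ i, z i) {j j' : ι}
    (hj : x j ≤ min (y j) (z j)) (hyx : y j' ≤ x j') (hxz' : x j' < z j') :
    HasTwoTypePair x y z := by
  obtain ⟨k, hk⟩ := exists_lt_of_sum_eq_of_ne hxz.symm fun h => hxz'.ne' (congrFun h j')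
  rcases le_or_gt (y k) (x k) with hyk | hyk
  · exact ⟨j, k, by rintro rfl; exact (hk.trans_le (hj.trans (min_le_right _ _))).false,
      Or.inl ⟨hj, max_le hyk hk.le⟩⟩
  · exact ⟨j', k, by rintro rfl; exact lt_asymm hk hxz',
      Or.inr ⟨hyx, hxz'.le, hk.le, hyk.le⟩⟩

theorem hasTwoTypePair_of_lt_between_of_max_le (hxz : ∑ i, x i = ∑ i, z i) {j j' : ι}
    (hzx : z j < x j) (hxy : x j ≤ y j) (hj' : max (y j') (z j') ≤ x j') :
    HasTwoTypePair x y z := by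
  obtain ⟨k, hk⟩ := exists_lt_of_sum_eq_of_ne hxz fun h => hzx.ne (congrFun h j).symm
  rcases le_or_gt (x k) (y k) with hxk | hxk
  · exact ⟨k, j', by rintro rfl; exact (hk.trans_le ((le_max_right _ _).trans hj')).false,
      Or.inl ⟨le_min hxk hk.le, hj'⟩⟩
  · exact ⟨k, j, by rintro rfl; exact lt_asymm hk hzx, Or.inr ⟨hxk.le, hk.le, hzx.le, hxy⟩⟩

theorem hasTwoTypePair_of_sum_eq (hxy : ∑ i, x i = ∑ i, y i) (hxz : ∑ i, x i = ∑ i, z i)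
    (hne : x ≠ y) : HasTwoTypePair x y z := by
  obtain ⟨j, hj⟩ := exists_lt_of_sum_eq_of_ne hxy hne
  obtain ⟨j', hj'⟩ := exists_lt_of_sum_eq_of_ne hxy.symm hne.symm
  have hjj' : j ≠ j' := by rintro rfl; exact lt_asymm hj hj'
  rcases le_or_gt (x j) (z j) with hjz | hjz <;> rcases le_or_gt (z j') (x j') with hj'z | hj'z
  · exact ⟨j, j', hjj', Or.inl ⟨le_min hj.le hjz, max_le hj'.le hj'z⟩⟩
  · exact hasTwoTypePair_of_le_min_of_lt_between hxz (le_min hj.le hjz) hj'.le hj'z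
  · exact hasTwoTypePair_of_lt_between_of_max_le hxz hjz hj.le (max_le hj'.le hj'z)
  · exact ⟨j', j, hjj'.symm, Or.inr ⟨hj'.le, hj'z.le, hjz.le, hj.le⟩⟩

end TwoTypes

/-- For divisions `x, y, z` over `m` projects with `x ≠ y`, there are
distinct projects `j, j'` with either (i) `x j ≤ min (y j) (z j)` and
`x j' ≥ max (y j') (z j')`, or (ii) `y j ≤ x j ≤ z j` and `z j' ≤ x j' ≤ y j'`. -/
theorem guaranteed_two_types {m : ℕ} (x y z : Fin m → ℝ)
    (hx : IsDivision x) (hy : IsDivision y) (hz : IsDivision z) (hxy : x ≠ y) :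
    ∃ j j' : Fin m, j ≠ j' ∧
      ((x j ≤ min (y j) (z j) ∧ max (y j') (z j') ≤ x j') ∨
       (y j ≤ x j ∧ x j ≤ z j ∧ z j' ≤ x j' ∧ x j' ≤ y j')) :=
  hasTwoTypePair_of_sum_eq (hx.2.trans hy.2.symm) (hx.2.trans hz.2.symm) hxy
end

section
/- No truthful budget aggregation mechanism can achieve ℓ1-loss less than 1/2: for every m ≥ 2 and every truthful mechanism f : D(m)^2 → D(m) for 2 voters over m projects, there exists a preference profile V with ℓ(V) ≥ 1/2. -/
open Finset

/-!
Let `e₀, e₁` be the divisions that put the whole budget on two distinct projects and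
`a = f (e₀, e₁)`. Since `a₀ + a₁ ≤ 1`, one of them, say `a₀`, is at most `1/2`. Replacing
`e₁` by `a` gives a profile on which `f` must still output `a`: otherwise the second voter,
with peak `a`, would gain by reporting `e₁`. The mean of `(e₀, a)` lies halfway between `e₀`
and `a`, so the loss there is `d(a, e₀) / 2 = 1 - a₀ ≥ 1/2`.
-/

section L1

variable {m : ℕ}

lemma l1_nonneg (x y : Fin m → ℝ) : 0 ≤ l1 x y :=
  sum_nonneg fun _ _ => abs_nonneg _

lemma l1_self (x : Fin m → ℝ) : l1 x x = 0 := by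
  simp [l1]

lemma eq_of_l1_eq_zero {x y : Fin m → ℝ} (h : l1 x y = 0) : x = y := by
  funext j
  have hj := (sum_eq_zero_iff_of_nonneg fun k _ => abs_nonneg (x k - y k)).mp h j (mem_univ j)
  exact sub_eq_zero.mp (abs_eq_zero.mp hj)

lemma isDivision_single (j : Fin m) : IsDivision (Pi.single j (1 : ℝ)) := by
  refine ⟨fun k => ?_, by simp⟩
  rcases eq_or_ne k j with rfl | hk
  · simp
  · simp [Pi.single_eq_of_ne hk]

lemma IsDivision.add_le_one {a : Fin m → ℝ} (ha : IsDivision a) {j j' : Fin m} (h : j ≠ j') :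
    a j + a j' ≤ 1 := by
  rw [← sum_pair h, ← ha.2]
  exact sum_le_sum_of_subset_of_nonneg (subset_univ _) fun k _ _ => (ha.1 k).1

lemma IsDivision.l1_single {a : Fin m → ℝ} (ha : IsDivision a) (j : Fin m) :
    l1 a (Pi.single j 1) = 2 * (1 - a j) := by
  have hrest : ∑ k ∈ {j}ᶜ, |a k - (Pi.single j 1 : Fin m → ℝ) k| = ∑ k ∈ {j}ᶜ, a k :=
    sum_congr rfl fun k hk => by
      rw [Pi.single_eq_of_ne (by simpa using hk), sub_zero, abs_of_nonneg (ha.1 k).1]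
  have htotal := ha.2
  rw [Fintype.sum_eq_add_sum_compl j] at htotal
  rw [l1, Fintype.sum_eq_add_sum_compl j, hrest, Pi.single_eq_same,
    abs_of_nonpos (by linarith [(ha.1 j).2])]
  linarith

lemma l1_propDiv_of_ne {V : Fin 2 → Fin m → ℝ} {i i' : Fin 2} (h : i ≠ i') :
    l1 (V i) (propDiv V) = l1 (V i) (V i') / 2 := by
  have hmean : ∀ j, propDiv V j = (V i j + V i' j) / 2 := by
    intro j
    fin_cases i <;> fin_cases i' <;> simp_all [propDiv, add_comm]
  simp only [l1, hmean, sum_div]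
  refine sum_congr rfl fun j _ => ?_
  rw [show V i j - (V i j + V i' j) / 2 = (V i j - V i' j) / 2 by ring, abs_div, abs_two]

end L1

lemma isDivision_update {n m : ℕ} {V : Fin n → Fin m → ℝ} (hV : ∀ i, IsDivision (V i))
    {v : Fin m → ℝ} (hv : IsDivision v) (i : Fin n) :
    ∀ k, IsDivision (Function.update V i v k) :=
  Function.forall_update_iff V (p := fun _ => IsDivision) |>.mpr ⟨hv, fun k _ => hV k⟩

lemma Truthful.apply_update_apply_self {n m : ℕ} {f : (Fin n → Fin m → ℝ) → (Fin m → ℝ)}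
    (htruth : Truthful f) {V : Fin n → Fin m → ℝ} (hV : ∀ i, IsDivision (V i))
    (hfV : IsDivision (f V)) (i : Fin n) :
    f (Function.update V i (f V)) = f V := by
  have h := htruth _ (isDivision_update hV hfV i) i (V i) (hV i)
  simp only [Function.update_self, Function.update_idem, Function.update_eq_self,
    l1_self] at h
  exact eq_of_l1_eq_zero (le_antisymm h (l1_nonneg _ _))

/-- No truthful mechanism achieves ℓ1-loss below `1/2`: for every
`m ≥ 2` and every truthful mechanism for 2 voters over `m` projects, there is a
profile with loss at least `1/2`. -/
theorem truthful_lower_bound {m : ℕ} (hm : 2 ≤ m)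
    (f : (Fin 2 → Fin m → ℝ) → (Fin m → ℝ))
    (hdiv : ∀ V : Fin 2 → Fin m → ℝ, (∀ i, IsDivision (V i)) → IsDivision (f V))
    (htruth : Truthful f) :
    ∃ V : Fin 2 → Fin m → ℝ, (∀ i, IsDivision (V i)) ∧
      1 / 2 ≤ l1 (f V) (propDiv V) := by
  obtain ⟨j₀, j₁, hj⟩ : ∃ j₀ j₁ : Fin m, j₀ ≠ j₁ :=
    ⟨⟨0, by omega⟩, ⟨1, by omega⟩, by simp [Fin.ext_iff]⟩
  set J : Fin 2 → Fin m := ![j₀, j₁]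
  set V : Fin 2 → Fin m → ℝ := fun i => Pi.single (J i) 1
  have hV : ∀ i, IsDivision (V i) := fun i => isDivision_single (J i)
  have ha := hdiv V hV
  obtain ⟨i, i', hii', hai⟩ : ∃ i i' : Fin 2, i ≠ i' ∧ f V (J i) ≤ 1 / 2 := by
    have := ha.add_le_one hj
    by_cases h : f V j₀ ≤ 1 / 2
    · exact ⟨0, 1, by decide, h⟩
    · exact ⟨1, 0, by decide, by simp [J]; linarith⟩
  set W := Function.update V i' (f V)
  refine ⟨W, isDivision_update hV ha i', ?_⟩
  have hfW : f W = W i' := by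
    simpa only [W, Function.update_self] using htruth.apply_update_apply_self hV ha i'
  rw [hfW, l1_propDiv_of_ne hii'.symm]
  simp only [W, Function.update_self, Function.update_of_ne hii']
  rw [ha.l1_single]
  linarith
end
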